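/- SetCSE intersection and difference do not satisfy the commutative law: there exist nonempty finite sets A and B of nonzero vectors in ℝ² and vectors x, y belonging to both A and B such that SIM(x, B) < SIM(y, B) while SIM(y, A) < SIM(x, A). Consequently, x strictly precedes y in the order A ∩ B while y strictly precedes x in the order B ∩ A (so A ∩ B ≠ B ∩ A), and likewise the orders A \ B and B \ A disagree on {x, y} (so A \ B ≠ B \ A). -/

import Mathlib

open scoped BigOperators

/-- Cosine similarity of two vectors in a real inner product space. -/
noncomputable def sim {E : Type*} [NormedAddCommGroup E] [InnerProductSpace ℝ E] (u v : E) : ℝ :=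
  (inner ℝ u v : ℝ) / (‖u‖ * ‖v‖)

/-- Semantic similarity of a vector to a finite set of vectors: the average cosine similarity. -/
noncomputable def SIM {E : Type*} [NormedAddCommGroup E] [InnerProductSpace ℝ E]
    (x : E) (S : Finset E) : ℝ :=
  (1 / (S.card : ℝ)) * ∑ k ∈ S, sim x k

namespace SetCSEAux

noncomputable abbrev e (i : Fin 2) (r : ℝ) : EuclideanSpace ℝ (Fin 2) :=
  EuclideanSpace.single i r

lemma sim_e (i j : Fin 2) (r s : ℝ) (hr : 0 < r) (hs : 0 < s) :
    sim (e i r) (e j s) = if i = j then 1 else 0 := by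
  unfold sim e
  rw [EuclideanSpace.inner_single_left, EuclideanSpace.norm_single, EuclideanSpace.norm_single,
    EuclideanSpace.single_apply]
  simp only [starRingEnd_apply, star_trivial]
  rcases eq_or_ne i j with h | h
  · simp [h, abs_of_pos hr, abs_of_pos hs,
      div_self (by positivity : r * s ≠ 0)]
  · simp [h, Ne.symm h]

lemma e_apply (i j : Fin 2) (r : ℝ) : e i r j = if j = i then r else 0 :=
  EuclideanSpace.single_apply i r j

lemma e_ne (i j : Fin 2) (r s : ℝ) (h : r ≠ s ∨ (i ≠ j ∧ r ≠ 0)) : e i r ≠ e j s := by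
  intro heq
  have hi : e i r i = e j s i := congrArg (fun v => v i) heq
  rw [e_apply, e_apply, if_pos rfl] at hi
  rcases h with h | ⟨hij, hr⟩
  · rcases eq_or_ne i j with h2 | h2
    · rw [if_pos h2] at hi; exact h hi
    · rw [if_neg h2] at hi
      have hj : e i r j = e j s j := congrArg (fun v => v j) heq
      rw [e_apply, e_apply, if_pos rfl, if_neg (Ne.symm h2)] at hj
      exact h (hi.trans hj)
  · rw [if_neg hij] at hi; exact hr hi

lemma e_ne_zero (i : Fin 2) (r : ℝ) (hr : r ≠ 0) : e i r ≠ 0 := by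
  intro heq
  have : e i r i = (0 : EuclideanSpace ℝ (Fin 2)) i := congrArg (fun v => v i) heq
  rw [e_apply, if_pos rfl] at this
  exact hr this

end SetCSEAux

open SetCSEAux in
/-- SetCSE intersection and difference are not commutative: there exist nonempty finite sets
`A`, `B` of nonzero vectors in `ℝ²` and vectors `x, y ∈ A ∩ B` with `SIM(x,B) < SIM(y,B)` and
`SIM(y,A) < SIM(x,A)`; hence `x` strictly precedes `y` in the order `A ∩ B` while `y` strictly
precedes `x` in the order `B ∩ A`, and the orders `A \ B` and `B \ A` disagree on `{x, y}`. -/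
theorem setcse_not_commutative :
    ∃ (A B : Finset (EuclideanSpace ℝ (Fin 2))) (x y : EuclideanSpace ℝ (Fin 2)),
      A.Nonempty ∧ B.Nonempty ∧ (∀ v ∈ A, v ≠ 0) ∧ (∀ v ∈ B, v ≠ 0) ∧
      x ∈ A ∧ x ∈ B ∧ y ∈ A ∧ y ∈ B ∧
      SIM x B < SIM y B ∧ SIM y A < SIM x A ∧
      -- in `A ∩ B`, `x` strictly precedes `y` (i.e. `¬ (y ⪯ x)`); in `B ∩ A`, `y` strictly
      -- precedes `x`
      ¬ SIM y B ≤ SIM x B ∧ ¬ SIM x A ≤ SIM y A ∧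
      -- the orders `A \ B` and `B \ A` disagree on `{x, y}`: under `A \ B` we have `y ⪯ x` but
      -- not `x ⪯ y`, while under `B \ A` we have `x ⪯ y` but not `y ⪯ x`
      (SIM y B ≥ SIM x B ∧ ¬ SIM x B ≥ SIM y B) ∧
      (SIM x A ≥ SIM y A ∧ ¬ SIM y A ≥ SIM x A) := by
  classical
  set x : EuclideanSpace ℝ (Fin 2) := e 0 1 with hx
  set y : EuclideanSpace ℝ (Fin 2) := e 1 1 with hy
  set a : EuclideanSpace ℝ (Fin 2) := e 0 2 with ha
  set b : EuclideanSpace ℝ (Fin 2) := e 1 2 with hb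
  have hxy : x ≠ y := e_ne 0 1 1 1 (Or.inr ⟨by decide, one_ne_zero⟩)
  have hxa : x ≠ a := e_ne 0 0 1 2 (Or.inl (by norm_num : (1:ℝ) ≠ 2))
  have hya : y ≠ a := e_ne 1 0 1 2 (Or.inl (by norm_num : (1:ℝ) ≠ 2))
  have hxb : x ≠ b := e_ne 0 1 1 2 (Or.inl (by norm_num : (1:ℝ) ≠ 2))
  have hyb : y ≠ b := e_ne 1 1 1 2 (Or.inl (by norm_num : (1:ℝ) ≠ 2))
  refine ⟨{x, y, a}, {x, y, b}, x, y, ⟨x, by simp⟩, ⟨x, by simp⟩, ?_, ?_, by simp, by simp,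
    by simp, by simp, ?_⟩
  · intro v hv
    simp only [Finset.mem_insert, Finset.mem_singleton] at hv
    rcases hv with rfl | rfl | rfl
    exacts [e_ne_zero 0 1 one_ne_zero, e_ne_zero 1 1 one_ne_zero, e_ne_zero 0 2 two_ne_zero]
  · intro v hv
    simp only [Finset.mem_insert, Finset.mem_singleton] at hv
    rcases hv with rfl | rfl | rfl
    exacts [e_ne_zero 0 1 one_ne_zero, e_ne_zero 1 1 one_ne_zero, e_ne_zero 1 2 two_ne_zero]
  have sum_comp : ∀ (u : EuclideanSpace ℝ (Fin 2)) (v w z : EuclideanSpace ℝ (Fin 2)),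
      v ≠ w → v ≠ z → w ≠ z → ∑ k ∈ ({v, w, z} : Finset (EuclideanSpace ℝ (Fin 2))), sim u k
        = sim u v + sim u w + sim u z := by
    intro u v w z h1 h2 h3
    rw [Finset.sum_insert (by simp [h1, h2]), Finset.sum_insert (by simp [h3]),
      Finset.sum_singleton, add_assoc]
  have cardA : ({x, y, a} : Finset (EuclideanSpace ℝ (Fin 2))).card = 3 := by
    rw [Finset.card_insert_of_notMem (by simp [hxy, hxa]),
      Finset.card_insert_of_notMem (by simp [hya]), Finset.card_singleton]
  have cardB : ({x, y, b} : Finset (EuclideanSpace ℝ (Fin 2))).card = 3 := by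
    rw [Finset.card_insert_of_notMem (by simp [hxy, hxb]),
      Finset.card_insert_of_notMem (by simp [hyb]), Finset.card_singleton]
  have hsim : ∀ (i j : Fin 2) (r s : ℝ), 0 < r → 0 < s →
      sim (e i r) (e j s) = if i = j then 1 else 0 := sim_e
  have hSxB : SIM x ({x, y, b} : Finset _) = 1/3 := by
    rw [SIM, sum_comp x x y b hxy hxb hyb, cardB, hx, hy, hb,
      hsim 0 0 1 1 one_pos one_pos, hsim 0 1 1 1 one_pos one_pos,
      hsim 0 1 1 2 one_pos two_pos]
    norm_num
  have hSyB : SIM y ({x, y, b} : Finset _) = 2/3 := by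
    rw [SIM, sum_comp y x y b hxy hxb hyb, cardB, hx, hy, hb,
      hsim 1 0 1 1 one_pos one_pos, hsim 1 1 1 1 one_pos one_pos,
      hsim 1 1 1 2 one_pos two_pos]
    norm_num
  have hSxA : SIM x ({x, y, a} : Finset _) = 2/3 := by
    rw [SIM, sum_comp x x y a hxy hxa hya, cardA, hx, hy, ha,
      hsim 0 0 1 1 one_pos one_pos, hsim 0 1 1 1 one_pos one_pos,
      hsim 0 0 1 2 one_pos two_pos]
    norm_num
  have hSyA : SIM y ({x, y, a} : Finset _) = 1/3 := by
    rw [SIM, sum_comp y x y a hxy hxa hya, cardA, hx, hy, ha,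
      hsim 1 0 1 1 one_pos one_pos, hsim 1 1 1 1 one_pos one_pos,
      hsim 1 0 1 2 one_pos two_pos]
    norm_num
  rw [hSxB, hSyB, hSxA, hSyA]
  norm_num
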